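/- The triple (Ш⁰(B), ⋄, R_B), together with the natural algebra injection j_B: B → Ш⁰(B), is the free nonunitary Rota-Baxter algebra of weight λ over B: for every nonunitary Rota-Baxter algebra (A, R) of weight λ and every nonunitary algebra homomorphism f: B → A, there exists a unique Rota-Baxter algebra homomorphism f̄: Ш⁰(B) → A with f̄ ∘ j_B = f. -/

import Mathlib

/-! Rota-Baxter words over an alphabet `X`, with two bracket symbols. The
alphabet is `X ⊕ Bool`, where `Sum.inr false` is the opening bracket `⌊` and
`Sum.inr true` is the closing bracket `⌋`. Words are lists; sets of words are
combined by concatenation. -/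

/-- The opening bracket `⌊`. -/
def lb {X : Type*} : X ⊕ Bool := Sum.inr false

/-- The closing bracket `⌋`. -/
def rb {X : Type*} : X ⊕ Bool := Sum.inr true

/-- The one-letter word given by `x ∈ X`. -/
def letter {X : Type*} (x : X) : List (X ⊕ Bool) := [Sum.inl x]

/-- The bracketed word `⌊w⌋`. -/
def bracket {X : Type*} (w : List (X ⊕ Bool)) : List (X ⊕ Bool) := lb :: (w ++ [rb])

/-- Concatenation of two sets of words. -/
def catS {X : Type*} (Y Z : Set (List (X ⊕ Bool))) : Set (List (X ⊕ Bool)) :=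
  {w | ∃ y ∈ Y, ∃ z ∈ Z, w = y ++ z}

/-- The set `⌊Z⌋`. -/
def brS {X : Type*} (Z : Set (List (X ⊕ Bool))) : Set (List (X ⊕ Bool)) := bracket '' Z

/-- `powS Y n` is the `(n+1)`-fold concatenation power `Y^{n+1}`. -/
def powS {X : Type*} (Y : Set (List (X ⊕ Bool))) : ℕ → Set (List (X ⊕ Bool))
  | 0 => Y
  | n + 1 => catS Y (powS Y n)

/-- The set of one-letter words, identified with `X`. -/
def lettersS (X : Type*) : Set (List (X ⊕ Bool)) := Set.range letter

/-- The alternating product `Λ(Y, Z)`: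
`(⋃_{r≥1} (Y⌊Z⌋)^r) ∪ (⋃_{r≥0} (Y⌊Z⌋)^r Y) ∪ (⋃_{r≥1} (⌊Z⌋Y)^r) ∪ (⋃_{r≥0} (⌊Z⌋Y)^r ⌊Z⌋)`. -/
def altS {X : Type*} (Y Z : Set (List (X ⊕ Bool))) : Set (List (X ⊕ Bool)) :=
  (⋃ n, powS (catS Y (brS Z)) n) ∪ (Y ∪ ⋃ n, catS (powS (catS Y (brS Z)) n) Y) ∪
  (⋃ n, powS (catS (brS Z) Y) n) ∪ (brS Z ∪ ⋃ n, catS (powS (catS (brS Z) Y) n) (brS Z))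

/-- `𝔛₀ = X`, `𝔛_{n+1} = Λ(X, 𝔛_n)`. -/
def frakX (X : Type*) : ℕ → Set (List (X ⊕ Bool))
  | 0 => lettersS X
  | n + 1 => altS (lettersS X) (frakX X n)

/-- `𝔛_∞ = ⋃_n 𝔛_n`, the set of Rota-Baxter words over `X`. -/
def frakXinf (X : Type*) : Set (List (X ⊕ Bool)) := ⋃ n, frakX X n

/-! The free `k`-module on words, basis elements, and the structural linear
maps (bracketing and one-sided concatenation), together with the head/tail
type of a Rota-Baxter word. -/

/-- The basis element of the free `k`-module on words given by the word `w`. -/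
noncomputable def sw {X : Type*} (k : Type*) [CommRing k] (w : List (X ⊕ Bool)) :
    List (X ⊕ Bool) →₀ k := Finsupp.single w 1

/-- The linear operator `R_B` sending (the basis element of) a word `w` to `⌊w⌋`. -/
noncomputable def brL {X : Type*} (k : Type*) [CommRing k] :
    (List (X ⊕ Bool) →₀ k) →ₗ[k] (List (X ⊕ Bool) →₀ k) :=
  Finsupp.lmapDomain k k bracket

/-- Left concatenation by a fixed word `p`, as a linear map. -/
noncomputable def lcat {X : Type*} (k : Type*) [CommRing k] (p : List (X ⊕ Bool)) :
    (List (X ⊕ Bool) →₀ k) →ₗ[k] (List (X ⊕ Bool) →₀ k) :=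
  Finsupp.lmapDomain k k (fun w => p ++ w)

/-- Right concatenation by a fixed word `p`, as a linear map. -/
noncomputable def rcat {X : Type*} (k : Type*) [CommRing k] (p : List (X ⊕ Bool)) :
    (List (X ⊕ Bool) →₀ k) →ₗ[k] (List (X ⊕ Bool) →₀ k) :=
  Finsupp.lmapDomain k k (fun w => w ++ p)

/-- A word has head type `1` iff it starts with the opening bracket `⌊`. -/
def startsBr {X : Type*} (w : List (X ⊕ Bool)) : Prop := w.head? = some lb

/-- A word has tail type `1` iff it ends with the closing bracket `⌋`. -/
def endsBr {X : Type*} (w : List (X ⊕ Bool)) : Prop := w.getLast? = some rb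

/-- The tail type of `u` differs from the head type of `v`: `t(u) ≠ h(v)`. -/
def typeMismatch {X : Type*} (u v : List (X ⊕ Bool)) : Prop :=
  ¬ (endsBr u ↔ startsBr v)

/-! A Rota-Baxter word is a letter, a bracket `⌊z⌋`, or a concatenation `p q` of two
Rota-Baxter words with `t(p) ≠ h(q)`, in which case `p q = p ⋄ q`. So a Rota-Baxter
homomorphism extending `f` must send a word to the value obtained by reading it from the left,
letters through `f ∘ bX`, brackets through `R` and juxtaposition through the product; a depth
counter finds the bracket matching a leading `⌊`. This value, `evalWord`, does not depend on how
a word is split, since it is multiplicative on any concatenation starting with a Rota-Baxter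
word. Its linear extension commutes with `R_B`, and with the products by induction on both
factors along the recursive definition of `⋄`: the case `⌊u⌋ ⋄ ⌊v⌋` is the Rota-Baxter identity
in `A`. -/

namespace RotaBaxterWord

variable {X : Type*}

/-- Splits `w = a ++ ⌋ :: b` at the first `⌋` that takes the bracket depth, started at `c`,
below zero. -/
def splitAtClose : ℕ → List (X ⊕ Bool) → Option (List (X ⊕ Bool) × List (X ⊕ Bool))
  | _, [] => none
  | c, Sum.inl x :: t => (splitAtClose c t).map fun p => (Sum.inl x :: p.1, p.2)
  | c, Sum.inr false :: t => (splitAtClose (c + 1) t).map fun p => (Sum.inr false :: p.1, p.2)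
  | 0, Sum.inr true :: t => some ([], t)
  | c + 1, Sum.inr true :: t => (splitAtClose c t).map fun p => (Sum.inr true :: p.1, p.2)

theorem eq_append_of_splitAtClose_eq_some {c : ℕ} {l a b : List (X ⊕ Bool)}
    (h : splitAtClose c l = some (a, b)) : l = a ++ Sum.inr true :: b := by
  fun_induction splitAtClose c l generalizing a b <;>
    simp only [Option.map_eq_some_iff, Option.some.injEq, Prod.mk.injEq, reduceCtorEq] at h <;>
    grind

theorem length_lt_of_splitAtClose_eq_some {c : ℕ} {l a b : List (X ⊕ Bool)}
    (h : splitAtClose c l = some (a, b)) : a.length < l.length ∧ b.length < l.length := by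
  rw [eq_append_of_splitAtClose_eq_some h]
  grind

/-- `z` has matched brackets: `splitAtClose` runs through it without stopping and leaves the
depth unchanged. -/
def Balanced (z : List (X ⊕ Bool)) : Prop :=
  ∀ c rest, splitAtClose c (z ++ rest) = (splitAtClose c rest).map fun p => (z ++ p.1, p.2)

theorem balanced_singleton_inl (x : X) : Balanced [Sum.inl x] := by
  intro c rest
  simp [splitAtClose]

theorem Balanced.append {y z : List (X ⊕ Bool)} (hy : Balanced y) (hz : Balanced z) :
    Balanced (y ++ z) := by
  intro c rest
  rw [List.append_assoc, hy, hz]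
  cases splitAtClose c rest <;> simp

theorem Balanced.bracket {z : List (X ⊕ Bool)} (hz : Balanced z) : Balanced (bracket z) := by
  intro c rest
  have h : _root_.bracket z ++ rest = Sum.inr false :: (z ++ Sum.inr true :: rest) := by
    simp [_root_.bracket, lb, rb]
  rw [h, splitAtClose, hz, splitAtClose]
  rcases splitAtClose c rest with _ | ⟨a, b⟩ <;> simp [_root_.bracket, lb, rb]

theorem Balanced.splitAtClose_append_close {z : List (X ⊕ Bool)} (hz : Balanced z)
    (rest : List (X ⊕ Bool)) : splitAtClose 0 (z ++ Sum.inr true :: rest) = some (z, rest) := by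
  rw [hz]
  simp [splitAtClose]

section Eval

variable {A : Type*} [Zero A] [Mul A]

/-- The value of a word in `A` when letters act by `φ`, brackets by `R` and juxtaposition by
the product; ill-formed words get the junk value `0`. -/
def evalWord (φ : X → A) (R : A → A) : List (X ⊕ Bool) → A
  | [] => 0
  | [Sum.inl x] => φ x
  | Sum.inl x :: t :: ts => φ x * evalWord φ R (t :: ts)
  | Sum.inr true :: _ => 0
  | Sum.inr false :: t =>
      match _h : splitAtClose 0 t with
      | none => 0
      | some (z, []) => R (evalWord φ R z)
      | some (z, r :: rs) => R (evalWord φ R z) * evalWord φ R (r :: rs)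
  termination_by l => l.length
  decreasing_by
  all_goals try have := length_lt_of_splitAtClose_eq_some ‹_›
  all_goals grind

variable (φ : X → A) (R : A → A)

theorem evalWord_letter (x : X) : evalWord φ R (letter x) = φ x := by
  rw [letter, evalWord]

theorem evalWord_inl_cons (x : X) {t : List (X ⊕ Bool)} (ht : t ≠ []) :
    evalWord φ R (Sum.inl x :: t) = φ x * evalWord φ R t := by
  obtain ⟨y, ys, rfl⟩ := List.exists_cons_of_ne_nil ht
  rw [evalWord]

theorem evalWord_bracket {z : List (X ⊕ Bool)} (hz : Balanced z) :
    evalWord φ R (bracket z) = R (evalWord φ R z) := by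
  rw [bracket, lb, rb, evalWord, hz.splitAtClose_append_close]

theorem evalWord_bracket_append {z rest : List (X ⊕ Bool)} (hz : Balanced z) (hr : rest ≠ []) :
    evalWord φ R (bracket z ++ rest) = R (evalWord φ R z) * evalWord φ R rest := by
  obtain ⟨r, rs, rfl⟩ := List.exists_cons_of_ne_nil hr
  rw [bracket, lb, rb, List.cons_append, List.append_assoc, List.singleton_append, evalWord,
    hz.splitAtClose_append_close]

end Eval

theorem startsBr_append {p : List (X ⊕ Bool)} (q : List (X ⊕ Bool)) (hp : p ≠ []) :
    startsBr (p ++ q) ↔ startsBr p := by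
  rw [startsBr, startsBr, List.head?_append_of_ne_nil _ hp]

theorem endsBr_append (p : List (X ⊕ Bool)) {q : List (X ⊕ Bool)} (hq : q ≠ []) :
    endsBr (p ++ q) ↔ endsBr q := by
  rw [endsBr, endsBr, List.getLast?_append_of_ne_nil _ hq]

/-- `w` is nonempty with head type `h` and tail type `t`, a true type meaning a bracket. -/
def HasTypes (h t : Prop) (w : List (X ⊕ Bool)) : Prop :=
  w ≠ [] ∧ (startsBr w ↔ h) ∧ (endsBr w ↔ t)

theorem hasTypes_letter (x : X) : HasTypes False False (letter x) := by
  simp [HasTypes, letter, startsBr, endsBr, lb, rb]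

theorem hasTypes_bracket (z : List (X ⊕ Bool)) : HasTypes True True (bracket z) := by
  refine ⟨List.cons_ne_nil _ _, iff_of_true rfl trivial, iff_of_true ?_ trivial⟩
  rw [endsBr, bracket, ← List.cons_append, List.getLast?_concat]

theorem HasTypes.append {h t h' t' : Prop} {p q : List (X ⊕ Bool)} (hp : HasTypes h t p)
    (hq : HasTypes h' t' q) : HasTypes h t' (p ++ q) :=
  ⟨by simp [hp.1], (startsBr_append q hp.1).trans hp.2.1, (endsBr_append p hq.1).trans hq.2.2⟩

theorem HasTypes.typeMismatch {h t h' t' : Prop} {p q : List (X ⊕ Bool)} (hp : HasTypes h t p)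
    (hq : HasTypes h' t' q) (hne : ¬ (t ↔ h')) : typeMismatch p q := by
  rw [_root_.typeMismatch, hp.2.2, hq.2.1]
  exact hne

theorem forall_mem_powS {Y : Set (List (X ⊕ Bool))} {P : List (X ⊕ Bool) → Prop}
    (hY : ∀ w ∈ Y, P w) (hP : ∀ p q, P p → P q → P (p ++ q)) :
    ∀ n, ∀ w ∈ powS Y n, P w
  | 0 => hY
  | n + 1 => by
    rintro _ ⟨p, hp, q, hq, rfl⟩
    exact hP p q (hY p hp) (forall_mem_powS hY hP n q hq)

theorem hasTypes_of_mem_powS_letters_brackets {Z : Set (List (X ⊕ Bool))} {n : ℕ}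
    {w : List (X ⊕ Bool)} (hw : w ∈ powS (catS (lettersS X) (brS Z)) n) :
    HasTypes False True w := by
  refine forall_mem_powS ?_ (fun _ _ => HasTypes.append) n w hw
  rintro _ ⟨_, ⟨x, rfl⟩, _, ⟨z, -, rfl⟩, rfl⟩
  exact (hasTypes_letter x).append (hasTypes_bracket z)

theorem hasTypes_of_mem_powS_brackets_letters {Z : Set (List (X ⊕ Bool))} {n : ℕ}
    {w : List (X ⊕ Bool)} (hw : w ∈ powS (catS (brS Z) (lettersS X)) n) :
    HasTypes True False w := by
  refine forall_mem_powS ?_ (fun _ _ => HasTypes.append) n w hw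
  rintro _ ⟨_, ⟨z, -, rfl⟩, _, ⟨x, rfl⟩, rfl⟩
  exact (hasTypes_bracket z).append (hasTypes_letter x)

theorem frakX_subset_frakXinf (n : ℕ) : frakX X n ⊆ frakXinf X :=
  Set.subset_iUnion (frakX X) n

theorem letter_mem_frakXinf (x : X) : letter x ∈ frakXinf X :=
  frakX_subset_frakXinf 0 ⟨x, rfl⟩

theorem bracket_mem_frakX_succ {n : ℕ} {z : List (X ⊕ Bool)} (hz : z ∈ frakX X n) :
    bracket z ∈ frakX X (n + 1) :=
  Or.inr (Or.inl ⟨z, hz, rfl⟩)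

theorem bracket_mem_frakXinf {z : List (X ⊕ Bool)} (hz : z ∈ frakXinf X) :
    bracket z ∈ frakXinf X := by
  obtain ⟨n, hn⟩ := Set.mem_iUnion.1 hz
  exact frakX_subset_frakXinf (n + 1) (bracket_mem_frakX_succ hn)

theorem mem_frakXinf_of_mem_powS_letters_brackets {n a : ℕ} {w : List (X ⊕ Bool)}
    (hw : w ∈ powS (catS (lettersS X) (brS (frakX X n))) a) : w ∈ frakXinf X :=
  frakX_subset_frakXinf (n + 1) (Or.inl (Or.inl (Or.inl (Set.mem_iUnion.2 ⟨a, hw⟩))))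

theorem mem_frakXinf_of_mem_powS_brackets_letters {n a : ℕ} {w : List (X ⊕ Bool)}
    (hw : w ∈ powS (catS (brS (frakX X n)) (lettersS X)) a) : w ∈ frakXinf X :=
  frakX_subset_frakXinf (n + 1) (Or.inl (Or.inr (Set.mem_iUnion.2 ⟨a, hw⟩)))

def mismatchedConcat (W : Set (List (X ⊕ Bool))) : Set (List (X ⊕ Bool)) :=
  {u | ∃ p ∈ W, ∃ q ∈ W, p ≠ [] ∧ q ≠ [] ∧ typeMismatch p q ∧ u = p ++ q}

theorem append_mem_mismatchedConcat {W : Set (List (X ⊕ Bool))} {h t h' t' : Prop}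
    {p q : List (X ⊕ Bool)} (hp : p ∈ W) (hq : q ∈ W) (htp : HasTypes h t p)
    (htq : HasTypes h' t' q) (hne : ¬ (t ↔ h')) : p ++ q ∈ mismatchedConcat W :=
  ⟨p, hp, q, hq, htp.1, htq.1, htp.typeMismatch htq hne, rfl⟩

theorem powS_letters_brackets_subset_mismatchedConcat (n a : ℕ) :
    powS (catS (lettersS X) (brS (frakX X n))) a ⊆ mismatchedConcat (frakXinf X) := by
  cases a with
  | zero =>
    rintro _ ⟨_, ⟨x, rfl⟩, _, ⟨z, hz, rfl⟩, rfl⟩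
    exact append_mem_mismatchedConcat (letter_mem_frakXinf x)
      (frakX_subset_frakXinf _ (bracket_mem_frakX_succ hz))
      (hasTypes_letter x) (hasTypes_bracket z) (by simp)
  | succ a =>
    rintro _ ⟨p, hp, q, hq, rfl⟩
    have hp' : p ∈ powS (catS (lettersS X) (brS (frakX X n))) 0 := hp
    exact append_mem_mismatchedConcat (mem_frakXinf_of_mem_powS_letters_brackets hp')
      (mem_frakXinf_of_mem_powS_letters_brackets hq)
      (hasTypes_of_mem_powS_letters_brackets hp') (hasTypes_of_mem_powS_letters_brackets hq)
      (by simp)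

theorem powS_brackets_letters_subset_mismatchedConcat (n a : ℕ) :
    powS (catS (brS (frakX X n)) (lettersS X)) a ⊆ mismatchedConcat (frakXinf X) := by
  cases a with
  | zero =>
    rintro _ ⟨_, ⟨z, hz, rfl⟩, _, ⟨x, rfl⟩, rfl⟩
    exact append_mem_mismatchedConcat (frakX_subset_frakXinf _ (bracket_mem_frakX_succ hz))
      (letter_mem_frakXinf x) (hasTypes_bracket z) (hasTypes_letter x) (by simp)
  | succ a =>
    rintro _ ⟨p, hp, q, hq, rfl⟩
    have hp' : p ∈ powS (catS (brS (frakX X n)) (lettersS X)) 0 := hp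
    exact append_mem_mismatchedConcat (mem_frakXinf_of_mem_powS_brackets_letters hp')
      (mem_frakXinf_of_mem_powS_brackets_letters hq)
      (hasTypes_of_mem_powS_brackets_letters hp') (hasTypes_of_mem_powS_brackets_letters hq)
      (by simp)

theorem catS_powS_letters_brackets_letters_subset_mismatchedConcat (n a : ℕ) :
    catS (powS (catS (lettersS X) (brS (frakX X n))) a) (lettersS X) ⊆
      mismatchedConcat (frakXinf X) := by
  rintro _ ⟨p, hp, _, ⟨x, rfl⟩, rfl⟩
  exact append_mem_mismatchedConcat (mem_frakXinf_of_mem_powS_letters_brackets hp)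
    (letter_mem_frakXinf x) (hasTypes_of_mem_powS_letters_brackets hp) (hasTypes_letter x)
    (by simp)

theorem catS_powS_brackets_letters_brackets_subset_mismatchedConcat (n a : ℕ) :
    catS (powS (catS (brS (frakX X n)) (lettersS X)) a) (brS (frakX X n)) ⊆
      mismatchedConcat (frakXinf X) := by
  rintro _ ⟨p, hp, _, ⟨z, hz, rfl⟩, rfl⟩
  exact append_mem_mismatchedConcat (mem_frakXinf_of_mem_powS_brackets_letters hp)
    (frakX_subset_frakXinf _ (bracket_mem_frakX_succ hz))
    (hasTypes_of_mem_powS_brackets_letters hp) (hasTypes_bracket z) (by simp)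

theorem mem_frakXinf_cases {u : List (X ⊕ Bool)} (hu : u ∈ frakXinf X) :
    (∃ x, u = letter x) ∨ (∃ z ∈ frakXinf X, u = bracket z) ∨
      u ∈ mismatchedConcat (frakXinf X) := by
  obtain ⟨n, hn⟩ := Set.mem_iUnion.1 hu
  cases n with
  | zero =>
    obtain ⟨x, rfl⟩ := hn
    exact Or.inl ⟨x, rfl⟩
  | succ n =>
    rcases hn with ((h | ⟨x, rfl⟩ | h) | h) | ⟨z, hz, rfl⟩ | h
    · obtain ⟨a, ha⟩ := Set.mem_iUnion.1 h
      exact Or.inr (Or.inr (powS_letters_brackets_subset_mismatchedConcat n a ha))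
    · exact Or.inl ⟨x, rfl⟩
    · obtain ⟨a, ha⟩ := Set.mem_iUnion.1 h
      exact Or.inr (Or.inr
        (catS_powS_letters_brackets_letters_subset_mismatchedConcat n a ha))
    · obtain ⟨a, ha⟩ := Set.mem_iUnion.1 h
      exact Or.inr (Or.inr (powS_brackets_letters_subset_mismatchedConcat n a ha))
    · exact Or.inr (Or.inl ⟨z, frakX_subset_frakXinf n hz, rfl⟩)
    · obtain ⟨a, ha⟩ := Set.mem_iUnion.1 h
      exact Or.inr (Or.inr
        (catS_powS_brackets_letters_brackets_subset_mismatchedConcat n a ha))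

@[elab_as_elim]
theorem frakXinf_induction {P : ∀ u : List (X ⊕ Bool), u ∈ frakXinf X → Prop}
    (letter : ∀ x, P (letter x) (letter_mem_frakXinf x))
    (bracket : ∀ z (hz : z ∈ frakXinf X), P z hz → P (bracket z) (bracket_mem_frakXinf hz))
    (append : ∀ p (hp : p ∈ frakXinf X) q (hq : q ∈ frakXinf X) (hpq : p ++ q ∈ frakXinf X),
      p ≠ [] → q ≠ [] → typeMismatch p q → P p hp → P q hq → P (p ++ q) hpq)
    {u : List (X ⊕ Bool)} (hu : u ∈ frakXinf X) : P u hu := by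
  induction hlen : u.length using Nat.strong_induction_on generalizing u with
  | _ n ih =>
    rcases mem_frakXinf_cases hu with ⟨x, rfl⟩ | ⟨z, hz, rfl⟩ |
      ⟨p, hp, q, hq, hp0, hq0, hpq, rfl⟩
    · exact letter x
    · exact bracket z hz (ih _ (by simp [_root_.bracket] at hlen; omega) hz rfl)
    · have := List.length_pos_iff.2 hp0
      have := List.length_pos_iff.2 hq0
      rw [List.length_append] at hlen
      exact append p hp q hq hu hp0 hq0 hpq (ih _ (by omega) hp rfl) (ih _ (by omega) hq rfl)

theorem ne_nil_of_mem_frakXinf {u : List (X ⊕ Bool)} (hu : u ∈ frakXinf X) : u ≠ [] := by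
  rcases mem_frakXinf_cases hu with ⟨x, rfl⟩ | ⟨z, -, rfl⟩ | ⟨p, -, q, -, hp, -, -, rfl⟩
  · exact (hasTypes_letter x).1
  · exact (hasTypes_bracket z).1
  · simp [hp]

theorem balanced_of_mem_frakXinf {u : List (X ⊕ Bool)} (hu : u ∈ frakXinf X) : Balanced u :=
  frakXinf_induction balanced_singleton_inl (fun _ _ => Balanced.bracket)
    (fun _ _ _ _ _ _ _ _ => Balanced.append) hu

theorem evalWord_append {A : Type*} [Zero A] [Semigroup A] (φ : X → A) (R : A → A)
    {u : List (X ⊕ Bool)} (hu : u ∈ frakXinf X) {rest : List (X ⊕ Bool)} (hrest : rest ≠ []) :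
    evalWord φ R (u ++ rest) = evalWord φ R u * evalWord φ R rest := by
  induction hu using frakXinf_induction generalizing rest with
  | letter x =>
    rw [evalWord_letter, letter, List.singleton_append, evalWord_inl_cons φ R x hrest]
  | bracket z hz _ =>
    rw [evalWord_bracket_append φ R (balanced_of_mem_frakXinf hz) hrest,
      evalWord_bracket φ R (balanced_of_mem_frakXinf hz)]
  | append p _ q _ _ _ hq _ ihp ihq =>
    rw [List.append_assoc, ihp (by simp [hq]), ihq hrest, ihp hq, mul_assoc]

section Linear

variable {k : Type*} [CommRing k] (mul : (List (X ⊕ Bool) →₀ k) →ₗ[k] (List (X ⊕ Bool) →₀ k) →ₗ[k]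
  (List (X ⊕ Bool) →₀ k))

theorem brL_sw (u : List (X ⊕ Bool)) : brL k (sw k u) = sw k (bracket u) :=
  Finsupp.mapDomain_single

theorem lcat_sw (p u : List (X ⊕ Bool)) : lcat k p (sw k u) = sw k (p ++ u) :=
  Finsupp.mapDomain_single

theorem rcat_sw (p u : List (X ⊕ Bool)) : rcat k p (sw k u) = sw k (u ++ p) :=
  Finsupp.mapDomain_single

local notation "Ш⁰" => Submodule.span k (sw k '' frakXinf X)

theorem sw_mem_span {u : List (X ⊕ Bool)} (hu : u ∈ frakXinf X) : sw k u ∈ Ш⁰ :=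
  Submodule.subset_span ⟨u, hu, rfl⟩

section Uniqueness

variable {A : Type*} [Zero A] [Semigroup A] (φ : X → A) (R : A → A)

theorem apply_sw_eq_evalWord {S : Submodule k (List (X ⊕ Bool) →₀ k)}
    (hsw : ∀ u ∈ frakXinf X, sw k u ∈ S)
    (hmulS : ∀ a ∈ S, ∀ b ∈ S, mul a b ∈ S) (hbrS : ∀ a ∈ S, brL k a ∈ S)
    (hconcat : ∀ u ∈ frakXinf X, ∀ v ∈ frakXinf X, typeMismatch u v →
      mul (sw k u) (sw k v) = sw k (u ++ v))
    (g : S → A) (hgmul : ∀ a b : S, g ⟨mul a b, hmulS a a.2 b b.2⟩ = g a * g b)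
    (hgbr : ∀ a : S, g ⟨brL k a, hbrS a a.2⟩ = R (g a))
    (hgletter : ∀ x, g ⟨sw k (letter x), hsw _ (letter_mem_frakXinf x)⟩ = φ x)
    {u : List (X ⊕ Bool)} (hu : u ∈ frakXinf X) : g ⟨sw k u, hsw u hu⟩ = evalWord φ R u := by
  induction hu using frakXinf_induction with
  | letter x => rw [hgletter, evalWord_letter]
  | bracket z hz ih =>
    rw [evalWord_bracket φ R (balanced_of_mem_frakXinf hz), ← ih, ← hgbr]
    exact congrArg g (Subtype.ext (brL_sw z).symm)
  | append p hp q hq _ _ hq0 hpq ihp ihq =>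
    rw [evalWord_append φ R hp hq0, ← ihp, ← ihq, ← hgmul]
    exact congrArg g (Subtype.ext (hconcat p hp q hq hpq).symm)

end Uniqueness

variable {A : Type*} [NonUnitalRing A] [Module k A]

variable (k) in
noncomputable def evalLinear (φ : X → A) (R : A → A) : (List (X ⊕ Bool) →₀ k) →ₗ[k] A :=
  Finsupp.linearCombination k (evalWord φ R)

theorem map_mul_of_mem_span [SMulCommClass k A A] [IsScalarTower k A A] {M : Type*}
    [AddCommMonoid M] [Module k M] (T : M →ₗ[k] A) (μ : M →ₗ[k] M →ₗ[k] M) {s : Set M}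
    (hs : ∀ x ∈ s, ∀ y ∈ s, T (μ x y) = T x * T y) {a b : M}
    (ha : a ∈ Submodule.span k s) (hb : b ∈ Submodule.span k s) :
    T (μ a b) = T a * T b := by
  have hb' : ∀ x ∈ s, T (μ x b) = T x * T b := fun x hx =>
    LinearMap.eqOn_span' (f := T ∘ₗ μ x) (g := LinearMap.mulLeft k (T x) ∘ₗ T)
      (fun y hy => hs x hx y hy) hb
  exact LinearMap.eqOn_span' (f := T ∘ₗ μ.flip b) (g := LinearMap.mulRight k (T b) ∘ₗ T)
    hb' ha

variable (φ : X → A)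

theorem evalLinear_sw (R : A → A) (w : List (X ⊕ Bool)) :
    evalLinear k φ R (sw k w) = evalWord φ R w := by
  rw [evalLinear, sw, Finsupp.linearCombination_single, one_smul]

theorem evalLinear_brL (R : A →ₗ[k] A) {e : List (X ⊕ Bool) →₀ k} (he : e ∈ Ш⁰) :
    evalLinear k φ R (brL k e) = R (evalLinear k φ R e) := by
  refine LinearMap.eqOn_span' (f := evalLinear k φ R ∘ₗ brL k) (g := R ∘ₗ evalLinear k φ R)
    ?_ he
  rintro _ ⟨u, hu, rfl⟩
  simp only [LinearMap.comp_apply, brL_sw, evalLinear_sw,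
    evalWord_bracket φ R (balanced_of_mem_frakXinf hu)]

theorem evalLinear_lcat [SMulCommClass k A A] (R : A → A) {p : List (X ⊕ Bool)}
    (hp : p ∈ frakXinf X) {e : List (X ⊕ Bool) →₀ k} (he : e ∈ Ш⁰) :
    evalLinear k φ R (lcat k p e) = evalWord φ R p * evalLinear k φ R e := by
  refine LinearMap.eqOn_span' (f := evalLinear k φ R ∘ₗ lcat k p)
    (g := LinearMap.mulLeft k (evalWord φ R p) ∘ₗ evalLinear k φ R) ?_ he
  rintro _ ⟨u, hu, rfl⟩
  simp only [LinearMap.comp_apply, lcat_sw, evalLinear_sw, LinearMap.mulLeft_apply,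
    evalWord_append φ R hp (ne_nil_of_mem_frakXinf hu)]

theorem evalLinear_rcat [IsScalarTower k A A] (R : A → A) {p : List (X ⊕ Bool)}
    (hp : p ∈ frakXinf X) {e : List (X ⊕ Bool) →₀ k} (he : e ∈ Ш⁰) :
    evalLinear k φ R (rcat k p e) = evalLinear k φ R e * evalWord φ R p := by
  refine LinearMap.eqOn_span' (f := evalLinear k φ R ∘ₗ rcat k p)
    (g := LinearMap.mulRight k (evalWord φ R p) ∘ₗ evalLinear k φ R) ?_ he
  rintro _ ⟨u, hu, rfl⟩
  simp only [LinearMap.comp_apply, rcat_sw, evalLinear_sw, LinearMap.mulRight_apply,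
    evalWord_append φ R hu (ne_nil_of_mem_frakXinf hp)]

theorem evalLinear_mul_sw_append [SMulCommClass k A A] (R : A → A)
    (hsplitL : ∀ u ∈ frakXinf X, ∀ v ∈ frakXinf X, typeMismatch u v →
      ∀ w ∈ frakXinf X, mul (sw k (u ++ v)) (sw k w) = lcat k u (mul (sw k v) (sw k w)))
    (hmulS : ∀ a ∈ Ш⁰, ∀ b ∈ Ш⁰, mul a b ∈ Ш⁰)
    {p q w : List (X ⊕ Bool)} (hp : p ∈ frakXinf X) (hq : q ∈ frakXinf X)
    (hw : w ∈ frakXinf X) (hpq : typeMismatch p q)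
    (h : evalLinear k φ R (mul (sw k q) (sw k w)) = evalWord φ R q * evalWord φ R w) :
    evalLinear k φ R (mul (sw k (p ++ q)) (sw k w)) =
      evalWord φ R (p ++ q) * evalWord φ R w := by
  rw [hsplitL p hp q hq hpq w hw,
    evalLinear_lcat φ R hp (hmulS _ (sw_mem_span hq) _ (sw_mem_span hw)), h,
    evalWord_append φ R hp (ne_nil_of_mem_frakXinf hq), mul_assoc]

theorem evalLinear_mul_append_sw [IsScalarTower k A A] (R : A → A)
    (hsplitR : ∀ u ∈ frakXinf X, ∀ v ∈ frakXinf X, typeMismatch u v →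
      ∀ w ∈ frakXinf X, mul (sw k w) (sw k (u ++ v)) = rcat k v (mul (sw k w) (sw k u)))
    (hmulS : ∀ a ∈ Ш⁰, ∀ b ∈ Ш⁰, mul a b ∈ Ш⁰)
    {p q w : List (X ⊕ Bool)} (hp : p ∈ frakXinf X) (hq : q ∈ frakXinf X)
    (hw : w ∈ frakXinf X) (hpq : typeMismatch p q)
    (h : evalLinear k φ R (mul (sw k w) (sw k p)) = evalWord φ R w * evalWord φ R p) :
    evalLinear k φ R (mul (sw k w) (sw k (p ++ q))) =
      evalWord φ R w * evalWord φ R (p ++ q) := by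
  rw [hsplitR p hp q hq hpq w hw,
    evalLinear_rcat φ R hq (hmulS _ (sw_mem_span hw) _ (sw_mem_span hp)), h,
    evalWord_append φ R hp (ne_nil_of_mem_frakXinf hq), mul_assoc]

variable [SMulCommClass k A A] [IsScalarTower k A A]

theorem evalLinear_mul_sw_sw (R : A →ₗ[k] A) (lam : k)
    (hconcat : ∀ u ∈ frakXinf X, ∀ v ∈ frakXinf X, typeMismatch u v →
      mul (sw k u) (sw k v) = sw k (u ++ v))
    (hbr : ∀ u ∈ frakXinf X, ∀ v ∈ frakXinf X,
      mul (sw k (bracket u)) (sw k (bracket v)) =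
        brL k (mul (sw k (bracket u)) (sw k v)) +
          brL k (mul (sw k u) (sw k (bracket v))) +
          lam • brL k (mul (sw k u) (sw k v)))
    (hsplitL : ∀ u ∈ frakXinf X, ∀ v ∈ frakXinf X, typeMismatch u v →
      ∀ w ∈ frakXinf X, mul (sw k (u ++ v)) (sw k w) = lcat k u (mul (sw k v) (sw k w)))
    (hsplitR : ∀ u ∈ frakXinf X, ∀ v ∈ frakXinf X, typeMismatch u v →
      ∀ w ∈ frakXinf X, mul (sw k w) (sw k (u ++ v)) = rcat k v (mul (sw k w) (sw k u)))
    (hmulS : ∀ a ∈ Ш⁰, ∀ b ∈ Ш⁰, mul a b ∈ Ш⁰)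
    (hR : ∀ a b : A, R a * R b = R (R a * b + a * R b + lam • (a * b)))
    (hletters : ∀ x x',
      evalLinear k φ R (mul (sw k (letter x)) (sw k (letter x'))) = φ x * φ x')
    {u v : List (X ⊕ Bool)} (hu : u ∈ frakXinf X) (hv : v ∈ frakXinf X) :
    evalLinear k φ R (mul (sw k u) (sw k v)) = evalWord φ R u * evalWord φ R v := by
  have concat {u v} (hu : u ∈ frakXinf X) (hv : v ∈ frakXinf X) (huv : typeMismatch u v) :
      evalLinear k φ R (mul (sw k u) (sw k v)) = evalWord φ R u * evalWord φ R v := by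
    rw [hconcat u hu v hv huv, evalLinear_sw, evalWord_append φ R hu (ne_nil_of_mem_frakXinf hv)]
  induction hu using frakXinf_induction generalizing v with
  | letter x =>
    induction hv using frakXinf_induction with
    | letter x' => rw [hletters, evalWord_letter, evalWord_letter]
    | bracket z' hz' _ =>
      exact concat (letter_mem_frakXinf x) (bracket_mem_frakXinf hz')
        ((hasTypes_letter x).typeMismatch (hasTypes_bracket z') (by simp))
    | append p' hp' q' hq' _ _ _ hpq' ih =>
      exact evalLinear_mul_append_sw mul φ R hsplitR hmulS hp' hq' (letter_mem_frakXinf x) hpq'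
        ih
  | bracket z hz ihz =>
    have hbz := bracket_mem_frakXinf hz
    induction hv using frakXinf_induction with
    | letter x' =>
      exact concat hbz (letter_mem_frakXinf x')
        ((hasTypes_bracket z).typeMismatch (hasTypes_letter x') (by simp))
    | bracket z' hz' ihz' =>
      have hbz' := bracket_mem_frakXinf hz'
      rw [hbr z hz z' hz', map_add, map_add, map_smul,
        evalLinear_brL φ R (hmulS _ (sw_mem_span hbz) _ (sw_mem_span hz')),
        evalLinear_brL φ R (hmulS _ (sw_mem_span hz) _ (sw_mem_span hbz')),
        evalLinear_brL φ R (hmulS _ (sw_mem_span hz) _ (sw_mem_span hz')),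
        ihz', ihz hbz', ihz hz', evalWord_bracket φ R (balanced_of_mem_frakXinf hz),
        evalWord_bracket φ R (balanced_of_mem_frakXinf hz'), hR, map_add, map_add, map_smul]
    | append p' hp' q' hq' _ _ _ hpq' ih =>
      exact evalLinear_mul_append_sw mul φ R hsplitR hmulS hp' hq' hbz hpq' ih
  | append p hp q hq _ _ _ hpq _ ihq =>
    exact evalLinear_mul_sw_append mul φ R hsplitL hmulS hp hq hv hpq (ihq hv)

end Linear

end RotaBaxterWord

open RotaBaxterWord in
theorem stmt_13_general {k X B A : Type*} [CommRing k]
    [NonUnitalRing B] [Module k B]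
    [NonUnitalRing A] [Module k A] [SMulCommClass k A A] [IsScalarTower k A A]
    (bX : Module.Basis X k B) (lam : k)
    (mul : (List (X ⊕ Bool) →₀ k) →ₗ[k] (List (X ⊕ Bool) →₀ k) →ₗ[k]
      (List (X ⊕ Bool) →₀ k))
    (hconcat : ∀ u ∈ frakXinf X, ∀ v ∈ frakXinf X, typeMismatch u v →
      mul (sw k u) (sw k v) = sw k (u ++ v))
    (hXX : ∀ x x' : X,
      mul (sw k (letter x)) (sw k (letter x')) =
        (bX.constr k fun x₀ : X => sw k (letter x₀)) (bX x * bX x'))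
    (hbr : ∀ u ∈ frakXinf X, ∀ v ∈ frakXinf X,
      mul (sw k (bracket u)) (sw k (bracket v)) =
        brL k (mul (sw k (bracket u)) (sw k v)) +
          brL k (mul (sw k u) (sw k (bracket v))) +
          lam • brL k (mul (sw k u) (sw k v)))
    (hsplitL : ∀ u ∈ frakXinf X, ∀ v ∈ frakXinf X, typeMismatch u v →
      ∀ w ∈ frakXinf X, mul (sw k (u ++ v)) (sw k w) = lcat k u (mul (sw k v) (sw k w)))
    (hsplitR : ∀ u ∈ frakXinf X, ∀ v ∈ frakXinf X, typeMismatch u v →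
      ∀ w ∈ frakXinf X, mul (sw k w) (sw k (u ++ v)) = rcat k v (mul (sw k w) (sw k u)))
    -- closure of the span `S = Ш⁰(B)` under the product, the operator and `j_B`
    (S : Submodule k (List (X ⊕ Bool) →₀ k))
    (hS : S = Submodule.span k (sw k '' frakXinf X))
    (hmulS : ∀ a ∈ S, ∀ b ∈ S, mul a b ∈ S)
    (hbrS : ∀ a ∈ S, brL k a ∈ S)
    (hjS : ∀ x : B, (bX.constr k fun x₀ : X => sw k (letter x₀)) x ∈ S)
    -- `(A, R)` is a nonunitary Rota-Baxter algebra of weight `λ`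
    (R : A →ₗ[k] A)
    (hR : ∀ a b : A, R a * R b = R (R a * b + a * R b + lam • (a * b)))
    -- `f : B → A` is a nonunitary algebra homomorphism
    (f : B →ₗ[k] A) (hf : ∀ x y : B, f (x * y) = f x * f y) :
    ∃! fbar : S →ₗ[k] A,
      (∀ a b : S, fbar ⟨mul a b, hmulS a a.2 b b.2⟩ = fbar a * fbar b) ∧
      (∀ a : S, fbar ⟨brL k a, hbrS a a.2⟩ = R (fbar a)) ∧
      (∀ x : B, fbar ⟨(bX.constr k fun x₀ : X => sw k (letter x₀)) x, hjS x⟩ = f x) := by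
  subst hS
  set φ : X → A := fun x => f (bX x)
  set j := bX.constr k fun x₀ : X => sw k (letter x₀)
  have hj : evalLinear k φ R ∘ₗ j = f :=
    bX.ext fun x => by rw [LinearMap.comp_apply, bX.constr_basis, evalLinear_sw, evalWord_letter]
  have hletters (x x' : X) :
      evalLinear k φ R (mul (sw k (letter x)) (sw k (letter x'))) = φ x * φ x' := by
    rw [hXX, ← LinearMap.comp_apply, hj, hf]
  refine ⟨evalLinear k φ R ∘ₗ Submodule.subtype _,
    ⟨fun a b => ?_, fun a => ?_, fun x => ?_⟩, ?_⟩
  · refine map_mul_of_mem_span (evalLinear k φ R) mul ?_ a.2 b.2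
    rintro _ ⟨u, hu, rfl⟩ _ ⟨v, hv, rfl⟩
    rw [evalLinear_mul_sw_sw mul φ R lam hconcat hbr hsplitL hsplitR hmulS hR hletters hu hv,
      evalLinear_sw, evalLinear_sw]
  · exact evalLinear_brL φ R a.2
  · exact LinearMap.congr_fun hj x
  · rintro g ⟨hgmul, hgbr, hgj⟩
    refine LinearMap.ext_on Submodule.span_span_coe_preimage ?_
    rintro ⟨_, _⟩ ⟨u, hu, rfl⟩
    refine (apply_sw_eq_evalWord mul φ R (fun _ => sw_mem_span) hmulS hbrS hconcat g hgmul hgbr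
      (fun x => ?_) hu).trans (evalLinear_sw φ R u).symm
    have hx : j (bX x) = sw k (letter x) := bX.constr_basis k _ x
    exact (congrArg g (Subtype.ext hx.symm)).trans (hgj (bX x))

/-- `(Ш⁰(B), ⋄, R_B)`, together with the natural injection `j_B : B → Ш⁰(B)`
(sending the basis element `x ∈ X` of `B` to the one-letter word `x`), is the
free nonunitary Rota-Baxter algebra of weight `λ` over `B`: for every
nonunitary Rota-Baxter algebra `(A, R)` of weight `λ` and every nonunitary
algebra homomorphism `f : B → A`, there is a unique Rota-Baxter algebra
homomorphism `f̄ : Ш⁰(B) → A` with `f̄ ∘ j_B = f`. Here `Ш⁰(B)` is the span `S`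
of the Rota-Baxter words, with the product `⋄` (`mul`) and operator `R_B = brL`
satisfying the recursive defining clauses. -/
theorem stmt_13 {k X B A : Type*} [CommRing k]
    [NonUnitalRing B] [Module k B] [SMulCommClass k B B] [IsScalarTower k B B]
    [NonUnitalRing A] [Module k A] [SMulCommClass k A A] [IsScalarTower k A A]
    (bX : Module.Basis X k B) (lam : k)
    (mul : (List (X ⊕ Bool) →₀ k) →ₗ[k] (List (X ⊕ Bool) →₀ k) →ₗ[k]
      (List (X ⊕ Bool) →₀ k))
    (hconcat : ∀ u ∈ frakXinf X, ∀ v ∈ frakXinf X, typeMismatch u v →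
      mul (sw k u) (sw k v) = sw k (u ++ v))
    (hXX : ∀ x x' : X,
      mul (sw k (letter x)) (sw k (letter x')) =
        (bX.constr k fun x₀ : X => sw k (letter x₀)) (bX x * bX x'))
    (hbr : ∀ u ∈ frakXinf X, ∀ v ∈ frakXinf X,
      mul (sw k (bracket u)) (sw k (bracket v)) =
        brL k (mul (sw k (bracket u)) (sw k v)) +
          brL k (mul (sw k u) (sw k (bracket v))) +
          lam • brL k (mul (sw k u) (sw k v)))
    (hsplitL : ∀ u ∈ frakXinf X, ∀ v ∈ frakXinf X, typeMismatch u v →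
      ∀ w ∈ frakXinf X, mul (sw k (u ++ v)) (sw k w) = lcat k u (mul (sw k v) (sw k w)))
    (hsplitR : ∀ u ∈ frakXinf X, ∀ v ∈ frakXinf X, typeMismatch u v →
      ∀ w ∈ frakXinf X, mul (sw k w) (sw k (u ++ v)) = rcat k v (mul (sw k w) (sw k u)))
    -- closure of the span `S = Ш⁰(B)` under the product, the operator and `j_B`
    (S : Submodule k (List (X ⊕ Bool) →₀ k))
    (hS : S = Submodule.span k (sw k '' frakXinf X))
    (hmulS : ∀ a ∈ S, ∀ b ∈ S, mul a b ∈ S)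
    (hbrS : ∀ a ∈ S, brL k a ∈ S)
    (hjS : ∀ x : B, (bX.constr k fun x₀ : X => sw k (letter x₀)) x ∈ S)
    -- `(A, R)` is a nonunitary Rota-Baxter algebra of weight `λ`
    (R : A →ₗ[k] A)
    (hR : ∀ a b : A, R a * R b = R (R a * b + a * R b + lam • (a * b)))
    -- `f : B → A` is a nonunitary algebra homomorphism
    (f : B →ₗ[k] A) (hf : ∀ x y : B, f (x * y) = f x * f y) :
    ∃! fbar : S →ₗ[k] A,
      (∀ a b : S, fbar ⟨mul a b, hmulS a a.2 b b.2⟩ = fbar a * fbar b) ∧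
      (∀ a : S, fbar ⟨brL k a, hbrS a a.2⟩ = R (fbar a)) ∧
      (∀ x : B, fbar ⟨(bX.constr k fun x₀ : X => sw k (letter x₀)) x, hjS x⟩ = f x) :=
  stmt_13_general bX lam mul hconcat hXX hbr hsplitL hsplitR S hS hmulS hbrS hjS R hR f hf
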